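/- arXiv:2506.05407 — 4 statements merged into one kernel-verified Lean document; each statement's English description precedes it below -/
import Mathlib

section
/- Let X be a type of datasets equipped with a symmetric neighboring relation ~, let R be a nonempty finite set, let ε > 0 and Δ > 0, and let u : X × R → ℝ be a utility function such that |u(D,r) − u(D',r)| ≤ Δ for all r ∈ R whenever D ~ D'. Then for every pair of neighboring datasets D ~ D' and every outcome r ∈ R, the exponential-mechanism probabilities satisfy exp(ε·u(D,r)/(2Δ)) / Σ_{r'∈R} exp(ε·u(D,r')/(2Δ)) ≤ exp(ε) · exp(ε·u(D',r)/(2Δ)) / Σ_{r'∈R} exp(ε·u(D',r')/(2Δ)). -/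
/-- Pointwise likelihood-ratio bound for the exponential mechanism. -/
theorem exponential_mechanism_pointwise_ratio
    {X R : Type*} [Fintype R] [Nonempty R]
    (Neighbor : X → X → Prop) (hsymm : Symmetric Neighbor)
    (ε Δ : ℝ) (hε : 0 < ε) (hΔ : 0 < Δ)
    (u : X → R → ℝ)
    (hsens : ∀ D D', Neighbor D D' → ∀ r : R, |u D r - u D' r| ≤ Δ) :
    ∀ D D', Neighbor D D' → ∀ r : R,
      Real.exp (ε * u D r / (2 * Δ)) /
          (∑ r' : R, Real.exp (ε * u D r' / (2 * Δ))) ≤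
        Real.exp ε *
          (Real.exp (ε * u D' r / (2 * Δ)) /
            (∑ r' : R, Real.exp (ε * u D' r' / (2 * Δ)))) := by
  intro D D' hN r
  set SD := ∑ r' : R, Real.exp (ε * u D r' / (2 * Δ)) with hSD
  set SD' := ∑ r' : R, Real.exp (ε * u D' r' / (2 * Δ)) with hSD'
  have hSDpos : 0 < SD := Finset.sum_pos (fun i _ => Real.exp_pos _) Finset.univ_nonempty
  have hSD'pos : 0 < SD' := Finset.sum_pos (fun i _ => Real.exp_pos _) Finset.univ_nonempty
  -- numerator bound
  have hnum : Real.exp (ε * u D r / (2 * Δ)) ≤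
      Real.exp (ε / 2) * Real.exp (ε * u D' r / (2 * Δ)) := by
    rw [← Real.exp_add, Real.exp_le_exp]
    have h1 : u D r - u D' r ≤ Δ := (abs_le.mp (hsens D D' hN r)).2
    have : ε * u D r / (2 * Δ) - ε * u D' r / (2 * Δ) ≤ ε / 2 := by
      rw [div_sub_div_same, ← mul_sub]
      rw [div_le_div_iff₀ (by positivity) (by norm_num)]
      nlinarith
    linarith
  -- denominator bound
  have hden : SD' ≤ Real.exp (ε / 2) * SD := by
    rw [hSD, hSD', Finset.mul_sum]
    apply Finset.sum_le_sum
    intro i _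
    rw [← Real.exp_add, Real.exp_le_exp]
    have h1 : u D' i - u D i ≤ Δ := (abs_le.mp (hsens D' D (hsymm hN) i)).2
    have : ε * u D' i / (2 * Δ) - ε * u D i / (2 * Δ) ≤ ε / 2 := by
      rw [div_sub_div_same, ← mul_sub]
      rw [div_le_div_iff₀ (by positivity) (by norm_num)]
      nlinarith
    linarith
  have hinv : 1 / SD ≤ Real.exp (ε / 2) / SD' := by
    rw [div_le_div_iff₀ hSDpos hSD'pos]
    linarith
  have key : Real.exp (ε * u D r / (2 * Δ)) / SD ≤
      (Real.exp (ε / 2) * Real.exp (ε * u D' r / (2 * Δ))) * (Real.exp (ε / 2) / SD') := by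
    calc Real.exp (ε * u D r / (2 * Δ)) / SD
        = Real.exp (ε * u D r / (2 * Δ)) * (1 / SD) := by ring
      _ ≤ (Real.exp (ε / 2) * Real.exp (ε * u D' r / (2 * Δ))) * (Real.exp (ε / 2) / SD') :=
          mul_le_mul hnum hinv (by positivity) (by positivity)
  calc Real.exp (ε * u D r / (2 * Δ)) / SD
      ≤ (Real.exp (ε / 2) * Real.exp (ε * u D' r / (2 * Δ))) * (Real.exp (ε / 2) / SD') := key
    _ = (Real.exp (ε / 2) * Real.exp (ε / 2)) * (Real.exp (ε * u D' r / (2 * Δ)) / SD') := by ring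
    _ = Real.exp ε * (Real.exp (ε * u D' r / (2 * Δ)) / SD') := by
        rw [← Real.exp_add]; norm_num
end

section
/- Let X be a type of datasets equipped with a symmetric neighboring relation ~, and let R, S be countable sets. Suppose M₁ : X → PMF(R) is ε₁-DP, and M₂ : R × X → PMF(S) is such that for every fixed s ∈ R the mechanism D ↦ M₂(s, D) is ε₂-DP. Then the adaptive composition M(D) := M₁(D) >>= (fun s => M₂(s, D)) (first sample s from M₁(D), then sample from M₂(s, D)) is (ε₁ + ε₂)-DP. -/
/-- A mechanism `M : X → PMF R` is `ε`-DP with respect to a neighboring relation. -/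
def IsDP {X R : Type*} (Neighbor : X → X → Prop) (ε : ℝ) (M : X → PMF R) : Prop :=
  ∀ D D', Neighbor D D' → ∀ E : Set R,
    (M D).toOuterMeasure E ≤ ENNReal.ofReal (Real.exp ε) * (M D').toOuterMeasure E

/-- Sequential (adaptive) composition of DP mechanisms. -/
theorem sequential_composition_DP
    {X R S : Type*} [Countable R] [Countable S]
    (Neighbor : X → X → Prop) (hsymm : Symmetric Neighbor)
    (ε₁ ε₂ : ℝ)
    (M₁ : X → PMF R) (M₂ : R → X → PMF S)
    (h₁ : IsDP Neighbor ε₁ M₁)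
    (h₂ : ∀ s : R, IsDP Neighbor ε₂ (fun D => M₂ s D)) :
    IsDP Neighbor (ε₁ + ε₂) (fun D => (M₁ D).bind (fun s => M₂ s D)) := by
  intro D D' hN E
  simp only [PMF.toOuterMeasure_bind_apply]
  calc ∑' r, M₁ D r * (M₂ r D).toOuterMeasure E
      ≤ ∑' r, (ENNReal.ofReal (Real.exp ε₁) * M₁ D' r) *
          (ENNReal.ofReal (Real.exp ε₂) * (M₂ r D').toOuterMeasure E) := by
        refine ENNReal.tsum_le_tsum fun r => mul_le_mul' ?_ (h₂ r D D' hN E)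
        have := h₁ D D' hN {r}
        simpa [PMF.toOuterMeasure_apply_singleton] using this
    _ = ENNReal.ofReal (Real.exp (ε₁ + ε₂)) *
          ∑' r, M₁ D' r * (M₂ r D').toOuterMeasure E := by
        rw [← ENNReal.tsum_mul_left]
        congr 1; ext r
        rw [Real.exp_add, ENNReal.ofReal_mul (Real.exp_nonneg _)]
        ring
end

section
/- Let X be a type of datasets equipped with a symmetric neighboring relation ~, let R be a countable set, let ε* > 0 and k ≥ 1. Suppose for each i ∈ {1,…,k} we have mechanisms Mᵢ : (list of previous outputs in R) × X → PMF(R) such that for every fixed history s the mechanism D ↦ Mᵢ(s, D) is (ε*/k)-DP. Then the k-step adaptive composition that sequentially samples r₁ ~ M₁(D), r₂ ~ M₂(r₁, D), …, r_k ~ M_k((r₁,…,r_{k−1}), D) and outputs the tuple (r₁,…,r_k) is ε*-DP. -/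
/-- The `k`-step adaptive composition: sequentially sample `r₁ ~ M 0 [] D`,
`r₂ ~ M 1 [r₁] D`, …, feeding each mechanism the list of previous outputs,
and return the list of all `k` outputs. -/
noncomputable def adaptiveCompose {X R : Type*}
    (M : ℕ → List R → X → PMF R) : ℕ → X → PMF (List R)
  | 0, _ => PMF.pure []
  | (k + 1), D =>
      (adaptiveCompose M k D).bind (fun s => (M k s D).map (fun r => s ++ [r]))

/-!
Pure DP of a mechanism is equivalent to the pointwise bound
`M D r ≤ exp ε · M D' r`, in which form the privacy losses of a sequential composition
(a `PMF.bind`) visibly add up; post-processing (a `PMF.map`) costs nothing. By induction the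
`k`-step adaptive composition of `εᵢ`-DP steps is `∑ εᵢ`-DP, and `k · (ε*/k) = ε*`.
-/

section

variable {X R S : Type*} {Neighbor : X → X → Prop}

theorem isDP_iff_apply_le {ε : ℝ} {M : X → PMF R} :
    IsDP Neighbor ε M ↔
      ∀ D D', Neighbor D D' → ∀ r, M D r ≤ ENNReal.ofReal (Real.exp ε) * M D' r := by
  refine ⟨fun h D D' hn r => ?_, fun h D D' hn E => ?_⟩
  · simpa only [PMF.toOuterMeasure_apply_singleton] using h D D' hn {r}
  · rw [PMF.toOuterMeasure_apply, PMF.toOuterMeasure_apply, ← ENNReal.tsum_mul_left]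
    refine ENNReal.tsum_le_tsum fun r => ?_
    by_cases hr : r ∈ E
    · simpa only [Set.indicator_of_mem hr] using h D D' hn r
    · simp [Set.indicator_of_notMem hr]

theorem IsDP.map {ε : ℝ} {M : X → PMF R} (h : IsDP Neighbor ε M) (f : R → S) :
    IsDP Neighbor ε (fun D => (M D).map f) := fun D D' hn E => by
  simpa only [PMF.toOuterMeasure_map_apply] using h D D' hn (f ⁻¹' E)

theorem IsDP.bind {ε₁ ε₂ : ℝ} {M : X → PMF R} {F : R → X → PMF S}
    (hM : IsDP Neighbor ε₁ M) (hF : ∀ r, IsDP Neighbor ε₂ (F r)) :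
    IsDP Neighbor (ε₁ + ε₂) (fun D => (M D).bind (F · D)) := by
  rw [isDP_iff_apply_le] at hM ⊢
  simp only [isDP_iff_apply_le] at hF
  intro D D' hn s
  rw [PMF.bind_apply, PMF.bind_apply, Real.exp_add, ENNReal.ofReal_mul (Real.exp_nonneg _),
    ← ENNReal.tsum_mul_left]
  refine ENNReal.tsum_le_tsum fun r => ?_
  calc M D r * F r D s
      ≤ (ENNReal.ofReal (Real.exp ε₁) * M D' r) * (ENNReal.ofReal (Real.exp ε₂) * F r D' s) :=
        mul_le_mul' (hM D D' hn r) (hF r D D' hn s)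
    _ = _ := by ring

theorem isDP_adaptiveCompose {M : ℕ → List R → X → PMF R} {ε : ℕ → ℝ} {n : ℕ}
    (hM : ∀ i < n, ∀ s, IsDP Neighbor (ε i) (M i s)) :
    IsDP Neighbor (∑ i ∈ Finset.range n, ε i) (adaptiveCompose M n) := by
  induction n with
  | zero => intro D D' _ E; simp [adaptiveCompose]
  | succ n ih =>
    rw [Finset.sum_range_succ]
    exact (ih fun i hi => hM i (by omega)).bind fun s => (hM n (by omega) s).map _

end

theorem adaptive_composition_DP_general
    {X R : Type*}
    (Neighbor : X → X → Prop)
    (εstar : ℝ)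
    (k : ℕ) (hk : 1 ≤ k)
    (M : ℕ → List R → X → PMF R)
    (hM : ∀ i < k, ∀ s : List R, IsDP Neighbor (εstar / k) (fun D => M i s D)) :
    IsDP Neighbor εstar (adaptiveCompose M k) := by
  have hk₀ : (k : ℝ) ≠ 0 := Nat.cast_ne_zero.mpr (by omega)
  simpa [mul_div_cancel₀ _ hk₀] using isDP_adaptiveCompose (ε := fun _ => εstar / k) hM

/-- `k`-fold adaptive composition of `(ε*/k)`-DP mechanisms is `ε*`-DP. -/
theorem adaptive_composition_DP
    {X R : Type*} [Countable R]
    (Neighbor : X → X → Prop) (hsymm : Symmetric Neighbor)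
    (εstar : ℝ) (hε : 0 < εstar)
    (k : ℕ) (hk : 1 ≤ k)
    (M : ℕ → List R → X → PMF R)
    (hM : ∀ i < k, ∀ s : List R, IsDP Neighbor (εstar / k) (fun D => M i s D)) :
    IsDP Neighbor εstar (adaptiveCompose M k) :=
  adaptive_composition_DP_general Neighbor εstar k hk M hM
end

section
/- Let X be a type of datasets equipped with a symmetric neighboring relation ~, let R be a nonempty finite set, let ε > 0, and let u : X × R → ℝ be a utility function whose values all lie in [0,1]. Then u has sensitivity at most 1, i.e., |u(D,r) − u(D',r)| ≤ 1 for all D, D' and all r ∈ R, and the exponential mechanism with sensitivity bound Δ = 1, which on dataset D outputs r ∈ R with probability exp(ε·u(D,r)/2) / Σ_{r'∈R} exp(ε·u(D,r')/2), is ε-DP: for all neighboring D ~ D' and every subset E ⊆ R, Pr[M_u(D) ∈ E] ≤ exp(ε) · Pr[M_u(D') ∈ E]. -/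
/-- A utility function with values in [0,1] has sensitivity at most 1,
and the corresponding exponential mechanism with sensitivity bound Δ = 1 is ε-DP. -/
theorem bounded_utility_exponential_mechanism_DP
    {X R : Type*} [Fintype R] [Nonempty R]
    (Neighbor : X → X → Prop) (hsymm : Symmetric Neighbor)
    (ε : ℝ) (hε : 0 < ε)
    (u : X → R → ℝ) (hu : ∀ D (r : R), u D r ∈ Set.Icc (0 : ℝ) 1)
    (M : X → PMF R)
    (hM : ∀ D (r : R), M D r = ENNReal.ofReal
      (Real.exp (ε * u D r / 2) / ∑ r' : R, Real.exp (ε * u D r' / 2))) :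
    (∀ D D' (r : R), |u D r - u D' r| ≤ 1) ∧
    (∀ D D', Neighbor D D' → ∀ E : Set R,
      (M D).toOuterMeasure E ≤
        ENNReal.ofReal (Real.exp ε) * (M D').toOuterMeasure E) := by
  have hsens : ∀ D D' (r : R), |u D r - u D' r| ≤ 1 := by
    intro D D' r
    have h1 := hu D r
    have h2 := hu D' r
    simp [Set.mem_Icc] at h1 h2
    rw [abs_le]; constructor <;> linarith
  refine ⟨hsens, ?_⟩
  intro D D' _hN E
  -- pointwise bound
  have key : ∀ r : R, M D r ≤ ENNReal.ofReal (Real.exp ε) * M D' r := by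
    intro r
    rw [hM, hM, ← ENNReal.ofReal_mul (Real.exp_nonneg ε)]
    apply ENNReal.ofReal_le_ofReal
    set SD := ∑ r' : R, Real.exp (ε * u D r' / 2) with hSD
    set SD' := ∑ r' : R, Real.exp (ε * u D' r' / 2) with hSD'
    have hSDpos : 0 < SD := Finset.sum_pos (fun i _ => Real.exp_pos _) ⟨Classical.arbitrary R, Finset.mem_univ _⟩
    have hSD'pos : 0 < SD' := Finset.sum_pos (fun i _ => Real.exp_pos _) ⟨Classical.arbitrary R, Finset.mem_univ _⟩
    -- numerator bound
    have hnum : Real.exp (ε * u D r / 2) ≤ Real.exp (ε / 2) * Real.exp (ε * u D' r / 2) := by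
      rw [← Real.exp_add]
      apply Real.exp_le_exp.2
      have := (abs_le.1 (hsens D D' r)).2
      nlinarith
    -- denominator bound
    have hden : SD' ≤ Real.exp (ε / 2) * SD := by
      rw [Finset.mul_sum]
      apply Finset.sum_le_sum
      intro i _
      rw [← Real.exp_add]
      apply Real.exp_le_exp.2
      have := (abs_le.1 (hsens D' D i)).2
      nlinarith
    rw [div_le_iff₀ hSDpos]
    calc Real.exp (ε * u D r / 2)
        ≤ Real.exp (ε / 2) * Real.exp (ε * u D' r / 2) := hnum
      _ = Real.exp (ε * u D' r / 2) / SD' * (Real.exp (ε / 2) * SD') := by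
          field_simp
      _ ≤ Real.exp (ε * u D' r / 2) / SD' * (Real.exp (ε / 2) * (Real.exp (ε / 2) * SD)) := by
          apply mul_le_mul_of_nonneg_left _ (div_nonneg (Real.exp_nonneg _) hSD'pos.le)
          exact mul_le_mul_of_nonneg_left hden (Real.exp_nonneg _)
      _ = Real.exp ε * (Real.exp (ε * u D' r / 2) / SD') * SD := by
          have : Real.exp (ε / 2) * Real.exp (ε / 2) = Real.exp ε := by
            rw [← Real.exp_add]; ring_nf
          linear_combination (Real.exp (ε * u D' r / 2) / SD' * SD) * this
  -- sum over E
  rw [PMF.toOuterMeasure_apply, PMF.toOuterMeasure_apply, ← ENNReal.tsum_mul_left]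
  apply ENNReal.tsum_le_tsum
  intro r
  by_cases h : r ∈ E
  · simp [Set.indicator_of_mem h, key r]
  · simp [Set.indicator_of_notMem h]
end
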